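/- arXiv:0709.2413 — 5 statements merged into one kernel-verified Lean document; each statement's English description precedes it below -/
import Mathlib

section
/- Let (V, Δ, β) be a Hom-coalgebra and Δ_L = Δ - Δ^op with Δ^op = τ∘Δ. Then the β-coassociator of Δ_L satisfies c_β(Δ_L) = c_β(Δ) - Φ_{(13)}∘c_β(Δ) - Φ_{(213)}∘(β⊗Δ)∘Δ - Φ_{(12)}∘(Δ⊗β)∘Δ + Φ_{(23)}∘(β⊗Δ)∘Δ + Φ_{(231)}∘(Δ⊗β)∘Δ. -/
/-! Expanding `c_β(Δ - τ ∘ Δ)` bilinearly gives eight terms. Using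
`(τ ∘ Δ) ⊗ β = (τ ⊗ id) ∘ (Δ ⊗ β)`, `β ⊗ (τ ∘ Δ) = (id ⊗ τ) ∘ (β ⊗ Δ)` and the fact that `τ`
intertwines `Δ ⊗ β` with `β ⊗ Δ`, each term is some `Φ_σ` applied to `(Δ ⊗ β) ∘ Δ` or
`(β ⊗ Δ) ∘ Δ`; the two terms with `σ = (13)` combine into `Φ_{(13)} ∘ c_β(Δ)`. -/

open TensorProduct

noncomputable section

variable (K : Type*) [Field K] (M : Type*) [AddCommGroup M] [Module K M]

/-- The permutation `Φ_{(12)}` of the first two tensor factors of `M ⊗ (M ⊗ M)`. -/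
def phi12 : M ⊗[K] (M ⊗[K] M) →ₗ[K] M ⊗[K] (M ⊗[K] M) :=
  (TensorProduct.assoc K M M M).toLinearMap ∘ₗ
    LinearMap.rTensor M (TensorProduct.comm K M M).toLinearMap ∘ₗ
      (TensorProduct.assoc K M M M).symm.toLinearMap

/-- The permutation `Φ_{(23)}` of the last two tensor factors. -/
def phi23 : M ⊗[K] (M ⊗[K] M) →ₗ[K] M ⊗[K] (M ⊗[K] M) :=
  LinearMap.lTensor M (TensorProduct.comm K M M).toLinearMap

/-- `Φ_{(13)}`: x₁⊗x₂⊗x₃ ↦ x₃⊗x₂⊗x₁. -/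
def phi13 : M ⊗[K] (M ⊗[K] M) →ₗ[K] M ⊗[K] (M ⊗[K] M) :=
  phi12 K M ∘ₗ phi23 K M ∘ₗ phi12 K M

/-- `Φ_{(213)}`: x₁⊗x₂⊗x₃ ↦ x₂⊗x₃⊗x₁. -/
def phi213 : M ⊗[K] (M ⊗[K] M) →ₗ[K] M ⊗[K] (M ⊗[K] M) :=
  phi23 K M ∘ₗ phi12 K M

/-- `Φ_{(231)}`: x₁⊗x₂⊗x₃ ↦ x₃⊗x₁⊗x₂. -/
def phi231 : M ⊗[K] (M ⊗[K] M) →ₗ[K] M ⊗[K] (M ⊗[K] M) :=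
  phi12 K M ∘ₗ phi23 K M

/-- The `β`-coassociator `c_β(Δ) = (Δ⊗β)∘Δ - (β⊗Δ)∘Δ`, valued in `M ⊗ (M ⊗ M)`. -/
def coassociator (Δ : M →ₗ[K] M ⊗[K] M) (β : M →ₗ[K] M) :
    M →ₗ[K] M ⊗[K] (M ⊗[K] M) :=
  (TensorProduct.assoc K M M M).toLinearMap ∘ₗ TensorProduct.map Δ β ∘ₗ Δ
    - TensorProduct.map β Δ ∘ₗ Δ

/-- The opposite comultiplication `Δ^op = τ ∘ Δ`. -/
def deltaOp (Δ : M →ₗ[K] M ⊗[K] M) : M →ₗ[K] M ⊗[K] M :=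
  (TensorProduct.comm K M M).toLinearMap ∘ₗ Δ

/-- The map `Φ_σ` on `M ⊗ (M ⊗ M)` induced by `σ ∈ S₃` (on positions `0,1,2`),
`x₁⊗x₂⊗x₃ ↦ x_{σ⁻¹(1)}⊗x_{σ⁻¹(2)}⊗x_{σ⁻¹(3)}`. -/
def Phi (σ : Equiv.Perm (Fin 3)) : M ⊗[K] (M ⊗[K] M) →ₗ[K] M ⊗[K] (M ⊗[K] M) :=
  if σ = 1 then LinearMap.id
  else if σ = Equiv.swap 0 1 then phi12 K M
  else if σ = Equiv.swap 1 2 then phi23 K M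
  else if σ = Equiv.swap 0 2 then phi13 K M
  else if σ = Equiv.swap 0 1 * Equiv.swap 1 2 then phi231 K M
  else phi213 K M

section

variable {R : Type*} [CommRing R] {M₁ M₂ N₁ N₂ : Type*} [AddCommGroup M₁] [AddCommGroup M₂]
  [AddCommGroup N₁] [AddCommGroup N₂] [Module R M₁] [Module R M₂] [Module R N₁] [Module R N₂]

theorem TensorProduct.map_sub_left (f₁ f₂ : M₁ →ₗ[R] M₂) (g : N₁ →ₗ[R] N₂) :
    map (f₁ - f₂) g = map f₁ g - map f₂ g := by
  ext; simp [sub_tmul]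

theorem TensorProduct.map_sub_right (f : M₁ →ₗ[R] M₂) (g₁ g₂ : N₁ →ₗ[R] N₂) :
    map f (g₁ - g₂) = map f g₁ - map f g₂ := by
  ext; simp [tmul_sub]

end

theorem lTensor_comm_eq_phi23 :
    LinearMap.lTensor M (TensorProduct.comm K M M).toLinearMap = phi23 K M := rfl

theorem assoc_rTensor_comm_eq_phi12_assoc (t : (M ⊗[K] M) ⊗[K] M) :
    TensorProduct.assoc K M M M (LinearMap.rTensor M (TensorProduct.comm K M M).toLinearMap t) =
      phi12 K M (TensorProduct.assoc K M M M t) := by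
  simp [phi12]

theorem assoc_comm_eq_phi213 (t : M ⊗[K] (M ⊗[K] M)) :
    TensorProduct.assoc K M M M (TensorProduct.comm K M (M ⊗[K] M) t) = phi213 K M t := by
  have h : (TensorProduct.assoc K M M M).toLinearMap ∘ₗ
      (TensorProduct.comm K M (M ⊗[K] M)).toLinearMap = phi213 K M := by
    ext; simp [phi213, phi12, phi23]
  exact LinearMap.congr_fun h t

theorem comm_eq_phi231_assoc (t : (M ⊗[K] M) ⊗[K] M) :
    TensorProduct.comm K (M ⊗[K] M) M t = phi231 K M (TensorProduct.assoc K M M M t) := by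
  have h : (TensorProduct.comm K (M ⊗[K] M) M).toLinearMap =
      phi231 K M ∘ₗ (TensorProduct.assoc K M M M).toLinearMap := by
    ext; simp [phi231, phi12, phi23]
  exact LinearMap.congr_fun h t

theorem phi12_phi213_eq_phi13 (t : M ⊗[K] (M ⊗[K] M)) : phi12 K M (phi213 K M t) = phi13 K M t := rfl

theorem phi23_phi231_eq_phi13 (t : M ⊗[K] (M ⊗[K] M)) : phi23 K M (phi231 K M t) = phi13 K M t := by
  have h : phi23 K M ∘ₗ phi231 K M = phi13 K M := by
    ext; simp [phi231, phi13, phi12, phi23]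
  exact LinearMap.congr_fun h t

theorem assoc_map_deltaL_comp_deltaL (Δ : M →ₗ[K] M ⊗[K] M) (β : M →ₗ[K] M) :
    (TensorProduct.assoc K M M M).toLinearMap ∘ₗ
        TensorProduct.map (Δ - deltaOp K M Δ) β ∘ₗ (Δ - deltaOp K M Δ) =
      (TensorProduct.assoc K M M M).toLinearMap ∘ₗ TensorProduct.map Δ β ∘ₗ Δ
        - phi213 K M ∘ₗ TensorProduct.map β Δ ∘ₗ Δ
        - phi12 K M ∘ₗ (TensorProduct.assoc K M M M).toLinearMap ∘ₗ TensorProduct.map Δ β ∘ₗ Δ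
        + phi13 K M ∘ₗ TensorProduct.map β Δ ∘ₗ Δ := by
  ext x
  simp only [deltaOp, TensorProduct.map_sub_left, LinearMap.comp_apply, LinearMap.sub_apply,
    LinearMap.add_apply, map_sub, LinearEquiv.coe_coe, ← LinearMap.rTensor_map]
  simp only [TensorProduct.map_comm, assoc_rTensor_comm_eq_phi12_assoc, assoc_comm_eq_phi213, phi12_phi213_eq_phi13]
  abel

theorem map_deltaL_comp_deltaL (Δ : M →ₗ[K] M ⊗[K] M) (β : M →ₗ[K] M) :
    TensorProduct.map β (Δ - deltaOp K M Δ) ∘ₗ (Δ - deltaOp K M Δ) =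
      TensorProduct.map β Δ ∘ₗ Δ
        - phi231 K M ∘ₗ (TensorProduct.assoc K M M M).toLinearMap ∘ₗ TensorProduct.map Δ β ∘ₗ Δ
        - phi23 K M ∘ₗ TensorProduct.map β Δ ∘ₗ Δ
        + phi13 K M ∘ₗ (TensorProduct.assoc K M M M).toLinearMap ∘ₗ
            TensorProduct.map Δ β ∘ₗ Δ := by
  ext x
  simp only [deltaOp, TensorProduct.map_sub_right, LinearMap.comp_apply, LinearMap.sub_apply,
    LinearMap.add_apply, map_sub, LinearEquiv.coe_coe, ← LinearMap.lTensor_map]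
  simp only [lTensor_comm_eq_phi23, TensorProduct.map_comm, comm_eq_phi231_assoc, phi23_phi231_eq_phi13]
  abel

/-- expression of `c_β(Δ_L)` in terms of `Δ` only, where `Δ_L = Δ - Δ^op`. -/
theorem coassociator_deltaL (Δ : M →ₗ[K] M ⊗[K] M) (β : M →ₗ[K] M) :
    coassociator K M (Δ - deltaOp K M Δ) β =
      coassociator K M Δ β
        - phi13 K M ∘ₗ coassociator K M Δ β
        - phi213 K M ∘ₗ (TensorProduct.map β Δ ∘ₗ Δ)
        - phi12 K M ∘ₗ ((TensorProduct.assoc K M M M).toLinearMap ∘ₗ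
            TensorProduct.map Δ β ∘ₗ Δ)
        + phi23 K M ∘ₗ (TensorProduct.map β Δ ∘ₗ Δ)
        + phi231 K M ∘ₗ ((TensorProduct.assoc K M M M).toLinearMap ∘ₗ
            TensorProduct.map Δ β ∘ₗ Δ) := by
  rw [coassociator, assoc_map_deltaL_comp_deltaL, map_deltaL_comp_deltaL, coassociator,
    LinearMap.comp_sub]
  abel
end
end

section
/- Let (V, Δ, β) be a Hom-coalgebra and Δ_L = Δ - Δ^op. Then c_β(Δ_L) + Φ_{(213)}∘c_β(Δ_L) + Φ_{(231)}∘c_β(Δ_L) = 2 Σ_{σ∈S₃} sgn(σ) Φ_σ ∘ c_β(Δ), where the sum is over all six permutations of S₃ weighted by their signatures. -/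
/-!
Write `a = (Δ ⊗ β) ∘ Δ` and `b = (β ⊗ Δ) ∘ Δ`, so that `c_β(Δ) = a - b`. Since `Δ^op = τ ∘ Δ`,
each of the eight terms of `c_β(Δ - Δ^op)` is a permutation of `a` or of `b`:
`c_β(Δ_L) = (1 - Φ₁₂ + Φ₂₃₁ - Φ₁₃) a - (1 + Φ₂₁₃ - Φ₂₃ - Φ₁₃) b`.
Left multiplication by the cyclic sum `1 + Φ₂₁₃ + Φ₂₃₁` fixes the even permutations and sends
each transposition to the sum of all three, so it turns both coefficients into twice the
antisymmetrizer `Σ_σ sgn(σ) Φ_σ`.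
-/

open TensorProduct

noncomputable section

variable (K : Type*) [Field K] (M : Type*) [AddCommGroup M] [Module K M]

@[simp] lemma phi12_tmul (x y z : M) : phi12 K M (x ⊗ₜ (y ⊗ₜ z)) = y ⊗ₜ (x ⊗ₜ z) := by
  simp [phi12]

@[simp] lemma phi23_tmul (x y z : M) : phi23 K M (x ⊗ₜ (y ⊗ₜ z)) = x ⊗ₜ (z ⊗ₜ y) := by
  simp [phi23]

@[simp] lemma phi13_tmul (x y z : M) : phi13 K M (x ⊗ₜ (y ⊗ₜ z)) = z ⊗ₜ (y ⊗ₜ x) := by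
  simp [phi13]

@[simp] lemma phi213_tmul (x y z : M) : phi213 K M (x ⊗ₜ (y ⊗ₜ z)) = y ⊗ₜ (z ⊗ₜ x) := by
  simp [phi213]

@[simp] lemma phi231_tmul (x y z : M) : phi231 K M (x ⊗ₜ (y ⊗ₜ z)) = z ⊗ₜ (x ⊗ₜ y) := by
  simp [phi231]

lemma phi12_comp_phi213 : phi12 K M ∘ₗ phi213 K M = phi13 K M := by
  ext x y z; simp

lemma phi23_comp_phi231 : phi23 K M ∘ₗ phi231 K M = phi13 K M := by
  ext x y z; simp

lemma assoc_comp_comm : (TensorProduct.assoc K M M M).toLinearMap ∘ₗ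
    (TensorProduct.comm K M (M ⊗[K] M)).toLinearMap = phi213 K M := by
  ext x y z; simp

lemma comm_eq_phi231_comp_assoc : (TensorProduct.comm K (M ⊗[K] M) M).toLinearMap =
    phi231 K M ∘ₗ (TensorProduct.assoc K M M M).toLinearMap := by
  ext x y z; simp

section

variable {N P : Type*} [AddCommGroup N] [Module K N] [AddCommGroup P] [Module K P]

lemma map_sub_left (f₁ f₂ : N →ₗ[K] M ⊗[K] M) (g : P →ₗ[K] M) :
    TensorProduct.map (f₁ - f₂) g = TensorProduct.map f₁ g - TensorProduct.map f₂ g := by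
  ext x y
  simp [TensorProduct.sub_tmul]

lemma map_sub_right (g : N →ₗ[K] M) (f₁ f₂ : P →ₗ[K] M ⊗[K] M) :
    TensorProduct.map g (f₁ - f₂) = TensorProduct.map g f₁ - TensorProduct.map g f₂ :=
  (TensorProduct.mapBilinear (RingHom.id K) N P M (M ⊗[K] M) g).map_sub f₁ f₂

lemma assoc_comp_map_comm_left (f : N →ₗ[K] M ⊗[K] M) (g : P →ₗ[K] M) :
    (TensorProduct.assoc K M M M).toLinearMap ∘ₗ
        TensorProduct.map ((TensorProduct.comm K M M).toLinearMap ∘ₗ f) g =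
      phi12 K M ∘ₗ (TensorProduct.assoc K M M M).toLinearMap ∘ₗ TensorProduct.map f g := by
  simp only [phi12, ← LinearMap.rTensor_comp_map, LinearMap.comp_assoc]
  simp

lemma map_comm_right (g : N →ₗ[K] M) (f : P →ₗ[K] M ⊗[K] M) :
    TensorProduct.map g ((TensorProduct.comm K M M).toLinearMap ∘ₗ f) =
      phi23 K M ∘ₗ TensorProduct.map g f := by
  rw [phi23, LinearMap.lTensor_comp_map]

lemma assoc_comp_map_comp_comm (f : N →ₗ[K] M ⊗[K] M) (g : P →ₗ[K] M) :
    (TensorProduct.assoc K M M M).toLinearMap ∘ₗ TensorProduct.map f g ∘ₗ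
        (TensorProduct.comm K P N).toLinearMap =
      phi213 K M ∘ₗ TensorProduct.map g f := by
  rw [TensorProduct.map_comp_comm_eq, ← LinearMap.comp_assoc, assoc_comp_comm]

lemma map_comp_comm_eq_phi231 (g : N →ₗ[K] M) (f : P →ₗ[K] M ⊗[K] M) :
    TensorProduct.map g f ∘ₗ (TensorProduct.comm K P N).toLinearMap =
      phi231 K M ∘ₗ (TensorProduct.assoc K M M M).toLinearMap ∘ₗ TensorProduct.map f g := by
  rw [TensorProduct.map_comp_comm_eq, comm_eq_phi231_comp_assoc, LinearMap.comp_assoc]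

end

lemma coassociator_sub_deltaOp (Δ : M →ₗ[K] M ⊗[K] M) (β : M →ₗ[K] M) :
    coassociator K M (Δ - deltaOp K M Δ) β =
      (LinearMap.id - phi12 K M + phi231 K M - phi13 K M) ∘ₗ
          (TensorProduct.assoc K M M M).toLinearMap ∘ₗ TensorProduct.map Δ β ∘ₗ Δ
        - (LinearMap.id + phi213 K M - phi23 K M - phi13 K M) ∘ₗ TensorProduct.map β Δ ∘ₗ Δ := by
  have hleft : (TensorProduct.assoc K M M M).toLinearMap ∘ₗ
      TensorProduct.map (Δ - deltaOp K M Δ) β =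
        (LinearMap.id - phi12 K M) ∘ₗ (TensorProduct.assoc K M M M).toLinearMap ∘ₗ
          TensorProduct.map Δ β := by
    rw [deltaOp, map_sub_left, LinearMap.comp_sub, assoc_comp_map_comm_left, LinearMap.sub_comp,
      LinearMap.id_comp]
  have hright : TensorProduct.map β (Δ - deltaOp K M Δ) =
      (LinearMap.id - phi23 K M) ∘ₗ TensorProduct.map β Δ := by
    rw [deltaOp, map_sub_right, map_comm_right, LinearMap.sub_comp, LinearMap.id_comp]
  have hcomm_left : (TensorProduct.assoc K M M M).toLinearMap ∘ₗ TensorProduct.map Δ β ∘ₗ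
      deltaOp K M Δ = phi213 K M ∘ₗ TensorProduct.map β Δ ∘ₗ Δ := by
    rw [deltaOp, ← LinearMap.comp_assoc, ← LinearMap.comp_assoc,
      LinearMap.comp_assoc _ (TensorProduct.map Δ β), assoc_comp_map_comp_comm,
      LinearMap.comp_assoc]
  have hcomm_right : TensorProduct.map β Δ ∘ₗ deltaOp K M Δ =
      phi231 K M ∘ₗ (TensorProduct.assoc K M M M).toLinearMap ∘ₗ TensorProduct.map Δ β ∘ₗ Δ := by
    rw [deltaOp, ← LinearMap.comp_assoc, map_comp_comm_eq_phi231]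
    simp only [LinearMap.comp_assoc]
  calc coassociator K M (Δ - deltaOp K M Δ) β
      = (LinearMap.id - phi12 K M) ∘ₗ
            ((TensorProduct.assoc K M M M).toLinearMap ∘ₗ TensorProduct.map Δ β ∘ₗ Δ
              - phi213 K M ∘ₗ TensorProduct.map β Δ ∘ₗ Δ)
          - (LinearMap.id - phi23 K M) ∘ₗ
            (TensorProduct.map β Δ ∘ₗ Δ
              - phi231 K M ∘ₗ (TensorProduct.assoc K M M M).toLinearMap ∘ₗ
                  TensorProduct.map Δ β ∘ₗ Δ) := by
        rw [coassociator, ← LinearMap.comp_assoc, hleft, hright, ← hcomm_left, ← hcomm_right]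
        simp only [LinearMap.comp_sub, LinearMap.comp_assoc]
    _ = _ := by
        simp only [LinearMap.comp_sub, LinearMap.sub_comp, LinearMap.add_comp, LinearMap.id_comp,
          ← LinearMap.comp_assoc, phi12_comp_phi213, phi23_comp_phi231]
        abel

def cyclicSum : M ⊗[K] (M ⊗[K] M) →ₗ[K] M ⊗[K] (M ⊗[K] M) :=
  LinearMap.id + phi213 K M + phi231 K M

def antisymmetrizer : M ⊗[K] (M ⊗[K] M) →ₗ[K] M ⊗[K] (M ⊗[K] M) :=
  LinearMap.id - phi12 K M - phi23 K M - phi13 K M + phi231 K M + phi213 K M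

lemma univ_perm_fin_three : (Finset.univ : Finset (Equiv.Perm (Fin 3))) =
    {1, Equiv.swap 0 1, Equiv.swap 1 2, Equiv.swap 0 2,
      Equiv.swap 0 1 * Equiv.swap 1 2, Equiv.swap 1 2 * Equiv.swap 0 1} := by
  decide

lemma sum_sign_smul_Phi :
    ∑ σ : Equiv.Perm (Fin 3), (Equiv.Perm.sign σ : ℤ) • Phi K M σ = antisymmetrizer K M := by
  rw [univ_perm_fin_three, Finset.sum_insert (by decide), Finset.sum_insert (by decide),
    Finset.sum_insert (by decide), Finset.sum_insert (by decide), Finset.sum_insert (by decide),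
    Finset.sum_singleton]
  simp +decide [Phi, antisymmetrizer]
  abel

lemma cyclicSum_comp_add_phi231_sub :
    cyclicSum K M ∘ₗ (LinearMap.id - phi12 K M + phi231 K M - phi13 K M) =
      (2 : ℤ) • antisymmetrizer K M := by
  ext x y z
  simp [cyclicSum, antisymmetrizer]
  abel

lemma cyclicSum_comp_add_phi213_sub :
    cyclicSum K M ∘ₗ (LinearMap.id + phi213 K M - phi23 K M - phi13 K M) =
      (2 : ℤ) • antisymmetrizer K M := by
  ext x y z
  simp [cyclicSum, antisymmetrizer]
  abel

/-- `c_β(Δ_L) + Φ_{(213)}∘c_β(Δ_L) + Φ_{(231)}∘c_β(Δ_L)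
    = 2 Σ_{σ∈S₃} sgn(σ) Φ_σ ∘ c_β(Δ)`. -/
theorem coJacobi_sum (Δ : M →ₗ[K] M ⊗[K] M) (β : M →ₗ[K] M) :
    coassociator K M (Δ - deltaOp K M Δ) β
      + phi213 K M ∘ₗ coassociator K M (Δ - deltaOp K M Δ) β
      + phi231 K M ∘ₗ coassociator K M (Δ - deltaOp K M Δ) β =
    (2 : ℤ) • ∑ σ : Equiv.Perm (Fin 3),
      ((Equiv.Perm.sign σ : ℤ) • (Phi K M σ ∘ₗ coassociator K M Δ β)) := by
  have hcyclic : ∀ f : M →ₗ[K] M ⊗[K] (M ⊗[K] M),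
      f + phi213 K M ∘ₗ f + phi231 K M ∘ₗ f = cyclicSum K M ∘ₗ f := by
    simp [cyclicSum, LinearMap.add_comp]
  have hsum : ∀ f : M →ₗ[K] M ⊗[K] (M ⊗[K] M),
      ∑ σ : Equiv.Perm (Fin 3), (Equiv.Perm.sign σ : ℤ) • (Phi K M σ ∘ₗ f) =
        (∑ σ : Equiv.Perm (Fin 3), (Equiv.Perm.sign σ : ℤ) • Phi K M σ) ∘ₗ f := by
    intro f; ext x; simp [LinearMap.sum_apply]
  rw [hcyclic, hsum, sum_sign_smul_Phi, coassociator_sub_deltaOp, coassociator, LinearMap.comp_sub]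
  simp only [← LinearMap.comp_assoc]
  rw [cyclicSum_comp_add_phi231_sub, cyclicSum_comp_add_phi213_sub]
  simp only [LinearMap.comp_sub, LinearMap.smul_comp, smul_sub, ← LinearMap.comp_assoc]
end
end

section
/- Let G be a subgroup of S₃ and (V, Δ, β) a G-Hom-coalgebra, i.e., Σ_{σ∈G} sgn(σ) Φ_σ ∘ c_β(Δ) = 0. Then Σ_{σ∈S₃} sgn(σ) Φ_σ ∘ c_β(Δ) = 0; hence (V, Δ, β) is a Hom-Lie admissible Hom-coalgebra. -/
open TensorProduct

noncomputable section

variable (K : Type*) [Field K] (M : Type*) [AddCommGroup M] [Module K M]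

/-!
If `F σ = sgn(σ) Φ_σ ∘ c_β(Δ)`, then `F (τ σ) = sgn(τ) Φ_τ ∘ F σ` because `σ ↦ Φ_σ` and `sgn` are
multiplicative. Summing this over `τ ∈ S₃` and `σ ∈ G` shows that `|G| • Σ_{S₃} F` equals
`Σ_τ sgn(τ) Φ_τ ∘ Σ_G F = 0`, and `|G|` is invertible in characteristic zero.
-/

lemma card_nsmul_sum_eq_zero_of_sum_subgroup_eq_zero {Γ A : Type*} [Group Γ] [Fintype Γ]
    [AddCommMonoid A] (G : Subgroup Γ) [Fintype G] (F : Γ → A) (T : Γ → A →+ A)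
    (hT : ∀ τ σ, F (τ * σ) = T τ (F σ)) (hG : ∑ σ : G, F σ = 0) :
    Fintype.card G • ∑ τ, F τ = 0 :=
  calc Fintype.card G • ∑ τ, F τ
      = ∑ σ : G, ∑ τ, F (τ * σ) := by
        rw [← Finset.card_univ, ← Finset.sum_const]
        exact Finset.sum_congr rfl fun σ _ =>
          (Fintype.sum_equiv (Equiv.mulRight (σ : Γ)) _ _ fun _ => rfl).symm
    _ = ∑ τ, T τ (∑ σ : G, F σ) := by
        rw [Finset.sum_comm]
        simp only [hT, map_sum]
    _ = 0 := by simp [hG]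

section

variable {K M}

lemma Phi_tmul (σ : Equiv.Perm (Fin 3)) (x : Fin 3 → M) :
    Phi K M σ (x 0 ⊗ₜ (x 1 ⊗ₜ x 2)) = x (σ⁻¹ 0) ⊗ₜ (x (σ⁻¹ 1) ⊗ₜ x (σ⁻¹ 2)) := by
  have hS₃ : ∀ π : Equiv.Perm (Fin 3), π = 1 ∨ π = Equiv.swap 0 1 ∨ π = Equiv.swap 1 2 ∨
      π = Equiv.swap 0 2 ∨ π = Equiv.swap 0 1 * Equiv.swap 1 2 ∨
      π = Equiv.swap 1 2 * Equiv.swap 0 1 := by decide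
  rcases hS₃ σ with rfl | rfl | rfl | rfl | rfl | rfl <;>
    simp +decide [Phi, phi12, phi23, phi13, phi213, phi231, Equiv.swap_apply_def]

lemma Phi_mul (τ σ : Equiv.Perm (Fin 3)) : Phi K M (τ * σ) = Phi K M τ ∘ₗ Phi K M σ := by
  ext a b c
  let x : Fin 3 → M := ![a, b, c]
  change Phi K M (τ * σ) (x 0 ⊗ₜ (x 1 ⊗ₜ x 2)) = Phi K M τ (Phi K M σ (x 0 ⊗ₜ (x 1 ⊗ₜ x 2)))
  rw [Phi_tmul, Phi_tmul σ]
  exact (Phi_tmul τ (x ∘ ⇑σ⁻¹)).symm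

lemma sign_smul_Phi_mul (τ σ : Equiv.Perm (Fin 3)) :
    (Equiv.Perm.sign (τ * σ) : ℤ) • Phi K M (τ * σ) =
      ((Equiv.Perm.sign τ : ℤ) • Phi K M τ) ∘ₗ ((Equiv.Perm.sign σ : ℤ) • Phi K M σ) := by
  rw [Phi_mul, LinearMap.smul_comp, LinearMap.comp_smul, smul_smul, map_mul, Units.val_mul,
    mul_comm]

end

open scoped Classical in
/-- every `G`-Hom-coalgebra, for a subgroup `G` of `S₃`,
is a Hom-Lie admissible Hom-coalgebra:
`Σ_{σ∈G} sgn(σ) Φ_σ ∘ c_β(Δ) = 0` implies `Σ_{σ∈S₃} sgn(σ) Φ_σ ∘ c_β(Δ) = 0`. -/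
theorem GHom_implies_homLie_admissible [CharZero K] (G : Subgroup (Equiv.Perm (Fin 3)))
    (Δ : M →ₗ[K] M ⊗[K] M) (β : M →ₗ[K] M)
    (hG : ∑ σ : G, ((Equiv.Perm.sign (σ : Equiv.Perm (Fin 3)) : ℤ) •
        (Phi K M (σ : Equiv.Perm (Fin 3)) ∘ₗ coassociator K M Δ β)) = 0) :
    ∑ σ : Equiv.Perm (Fin 3),
      ((Equiv.Perm.sign σ : ℤ) • (Phi K M σ ∘ₗ coassociator K M Δ β)) = 0 := by
  simp only [← LinearMap.smul_comp] at hG ⊢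
  have hcard := card_nsmul_sum_eq_zero_of_sum_subgroup_eq_zero G
    (fun σ => ((Equiv.Perm.sign σ : ℤ) • Phi K M σ) ∘ₗ coassociator K M Δ β)
    (fun τ => (LinearMap.compRight ℤ ((Equiv.Perm.sign τ : ℤ) • Phi K M τ)).toAddMonoidHom)
    (fun τ σ => by simp only [sign_smul_Phi_mul]; rfl) hG
  rw [← Nat.cast_smul_eq_nsmul K, smul_eq_zero] at hcard
  exact hcard.resolve_left (Nat.cast_ne_zero.mpr Fintype.card_ne_zero)
end
end

section
/- Let (V, μ, α) be a Hom-associative algebra, i.e. α is a linear map and μ(α(x)⊗μ(y⊗z)) = μ(μ(x⊗y)⊗α(z)). Then the commutator bracket [x,y] = μ(x⊗y) - μ(y⊗x) satisfies the Hom-Jacobi identity [α(x),[y,z]] + [α(y),[z,x]] + [α(z),[x,y]] = 0, so (V, [·,·], α) is a Hom-Lie algebra. -/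
/-- in a Hom-associative algebra `(V, μ, α)` the commutator bracket
`[x,y] = μ(x⊗y) - μ(y⊗x)` satisfies the Hom-Jacobi identity, so it yields a
Hom-Lie algebra. -/
theorem homAssociative_commutator_homJacobi
    {K V : Type*} [Field K] [AddCommGroup V] [Module K V]
    (μ : V →ₗ[K] V →ₗ[K] V) (α : V →ₗ[K] V)
    (hassoc : ∀ x y z : V, μ (α x) (μ y z) = μ (μ x y) (α z)) :
    ∀ x y z : V,
      (μ (α x) (μ y z - μ z y) - μ (μ y z - μ z y) (α x))
      + (μ (α y) (μ z x - μ x z) - μ (μ z x - μ x z) (α y))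
      + (μ (α z) (μ x y - μ y x) - μ (μ x y - μ y x) (α z)) = 0 := by
  intro x y z
  simp only [map_sub, LinearMap.sub_apply]
  rw [hassoc x y z, hassoc x z y, hassoc y z x, hassoc y x z, hassoc z x y, hassoc z y x]
  abel
end

section
/- In a Hom-bialgebra H with unit e₁ = η(1), if x and y are primitive elements then the commutator [x,y] = μ(x⊗y) - μ(y⊗x) is primitive: Δ([x,y]) = e₁⊗[x,y] + [x,y]⊗e₁. Consequently Prim(H), the set of primitive elements, is closed under the commutator bracket. -/
open TensorProduct

noncomputable section

/-- A Hom-bialgebra `(V, μ, α, η, Δ, β, ε)`: `(V,μ,α,η)` is a unital Hom-associative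
algebra, `(V,Δ,β,ε)` is a counital Hom-coassociative coalgebra, and `Δ`, `ε` are
morphisms of algebras. -/
structure HomBialgebra (K V : Type*) [Field K] [AddCommGroup V] [Module K V] where
  /-- the multiplication `μ : V⊗V → V` -/
  mul : V ⊗[K] V →ₗ[K] V
  /-- the algebra twisting map `α` -/
  alpha : V →ₗ[K] V
  /-- the unit `η : K → V` -/
  unit : K →ₗ[K] V
  /-- the comultiplication `Δ : V → V⊗V` -/
  comul : V →ₗ[K] V ⊗[K] V
  /-- the coalgebra twisting map `β` -/
  beta : V →ₗ[K] V
  /-- the counit `ε : V → K` -/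
  counit : V →ₗ[K] K
  /-- Hom-associativity: `μ∘(μ⊗α) = μ∘(α⊗μ)` (up to the associator) -/
  hom_assoc : mul ∘ₗ TensorProduct.map mul alpha =
    mul ∘ₗ TensorProduct.map alpha mul ∘ₗ (TensorProduct.assoc K V V V).toLinearMap
  /-- `η(1)` is a left unit -/
  one_mul : ∀ x : V, mul (unit 1 ⊗ₜ[K] x) = x
  /-- `η(1)` is a right unit -/
  mul_one : ∀ x : V, mul (x ⊗ₜ[K] unit 1) = x
  /-- Hom-coassociativity: `(β⊗Δ)∘Δ = (Δ⊗β)∘Δ` (up to the associator) -/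
  hom_coassoc : TensorProduct.map beta comul ∘ₗ comul =
    (TensorProduct.assoc K V V V).toLinearMap ∘ₗ TensorProduct.map comul beta ∘ₗ comul
  /-- counit axiom `(ε⊗id)∘Δ = id` -/
  counit_comul : ∀ x : V,
    TensorProduct.lid K V (TensorProduct.map counit LinearMap.id (comul x)) = x
  /-- counit axiom `(id⊗ε)∘Δ = id` -/
  comul_counit : ∀ x : V,
    TensorProduct.rid K V (TensorProduct.map LinearMap.id counit (comul x)) = x
  /-- `Δ(η(1)) = η(1)⊗η(1)` -/
  comul_unit : comul (unit 1) = unit 1 ⊗ₜ[K] unit 1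
  /-- `Δ` is multiplicative: `Δ(x·y) = Δ(x)•Δ(y)` (componentwise product on `V⊗V`) -/
  comul_mul : comul ∘ₗ mul =
    TensorProduct.map mul mul ∘ₗ (TensorProduct.tensorTensorTensorComm K V V V V).toLinearMap
      ∘ₗ TensorProduct.map comul comul
  /-- `ε(η(1)) = 1` -/
  counit_unit : counit (unit 1) = 1
  /-- `ε` is multiplicative -/
  counit_mul : ∀ x y : V, counit (mul (x ⊗ₜ[K] y)) = counit x * counit y

variable {K V : Type*} [Field K] [AddCommGroup V] [Module K V]

/-- The convolution product `f ⋆ g = μ ∘ (f⊗g) ∘ Δ` on `Hom(V,V)`. -/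
def HomBialgebra.conv (H : HomBialgebra K V) (f g : V →ₗ[K] V) : V →ₗ[K] V :=
  H.mul ∘ₗ TensorProduct.map f g ∘ₗ H.comul

namespace HomBialgebra

variable (H : HomBialgebra K V)

def IsPrimitive (x : V) : Prop :=
  H.comul x = H.unit 1 ⊗ₜ[K] x + x ⊗ₜ[K] H.unit 1

theorem comul_mul_tmul (a b : V) :
    H.comul (H.mul (a ⊗ₜ[K] b)) =
      map H.mul H.mul (tensorTensorTensorComm K V V V V (H.comul a ⊗ₜ[K] H.comul b)) :=
  LinearMap.congr_fun H.comul_mul (a ⊗ₜ[K] b)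

variable {H}

/-- The middle term is symmetric in `x` and `y`, so it cancels in a commutator. -/
theorem IsPrimitive.comul_mul {x y : V} (hx : H.IsPrimitive x) (hy : H.IsPrimitive y) :
    H.comul (H.mul (x ⊗ₜ[K] y)) =
      H.unit 1 ⊗ₜ[K] H.mul (x ⊗ₜ[K] y) + (x ⊗ₜ[K] y + y ⊗ₜ[K] x)
        + H.mul (x ⊗ₜ[K] y) ⊗ₜ[K] H.unit 1 := by
  rw [comul_mul_tmul, hx, hy]
  simp only [add_tmul, tmul_add, map_add, tensorTensorTensorComm_tmul, map_tmul,
    H.one_mul, H.mul_one]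
  abel

end HomBialgebra

/-- in a Hom-bialgebra, the commutator `[x,y] = μ(x⊗y) - μ(y⊗x)` of two
primitive elements is primitive; hence `Prim(H)` is closed under the bracket. -/
theorem commutator_of_primitives_is_primitive (H : HomBialgebra K V) (x y : V)
    (hx : H.comul x = H.unit 1 ⊗ₜ[K] x + x ⊗ₜ[K] H.unit 1)
    (hy : H.comul y = H.unit 1 ⊗ₜ[K] y + y ⊗ₜ[K] H.unit 1) :
    H.comul (H.mul (x ⊗ₜ[K] y) - H.mul (y ⊗ₜ[K] x)) =
      H.unit 1 ⊗ₜ[K] (H.mul (x ⊗ₜ[K] y) - H.mul (y ⊗ₜ[K] x))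
        + (H.mul (x ⊗ₜ[K] y) - H.mul (y ⊗ₜ[K] x)) ⊗ₜ[K] H.unit 1 := by
  have hx : H.IsPrimitive x := hx
  have hy : H.IsPrimitive y := hy
  rw [map_sub, hx.comul_mul hy, hy.comul_mul hx, tmul_sub, sub_tmul]
  abel
end
end
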